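/- arXiv:1806.06838 — 6 statements merged into one kernel-verified Lean document; each statement's English description precedes it below -/
import Mathlib

section
/- If A is an n×n primitive nonnegative real matrix, then the exponent of A (the least k such that A^k has all entries positive) is at most (n-1)^2 + 1. -/
def IsPrimitive {n : ℕ} (A : Matrix (Fin n) (Fin n) ℝ) : Prop :=
  (∀ i j, 0 ≤ A i j) ∧ ∃ k : ℕ, 0 < k ∧ ∀ i j, 0 < (A ^ k) i j

def ExpIs {n : ℕ} (A : Matrix (Fin n) (Fin n) ℝ) (e : ℕ) : Prop :=
  IsLeast {k : ℕ | 0 < k ∧ ∀ i j, 0 < (A ^ k) i j} e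

namespace WielandtAux


variable {n : ℕ} {M : Matrix (Fin n) (Fin n) ℝ}

theorem pow_nn (hM : ∀ i j, 0 ≤ M i j) : ∀ k i j, 0 ≤ (M ^ k) i j := by
  intro k
  induction k with
  | zero => intro i j; by_cases h : i = j <;> simp [Matrix.one_apply, h]
  | succ k ih =>
    intro i j
    rw [pow_succ, Matrix.mul_apply]
    exact Finset.sum_nonneg fun t _ => mul_nonneg (ih i t) (hM t j)

theorem comp (hM : ∀ i j, 0 ≤ M i j) {a b : ℕ} {i m j : Fin n}
    (h1 : 0 < (M ^ a) i m) (h2 : 0 < (M ^ b) m j) : 0 < (M ^ (a + b)) i j := by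
  rw [pow_add, Matrix.mul_apply]
  have hle : (M ^ a) i m * (M ^ b) m j ≤ ∑ t, (M ^ a) i t * (M ^ b) t j :=
    Finset.single_le_sum (f := fun t => (M ^ a) i t * (M ^ b) t j)
      (fun t _ => mul_nonneg (pow_nn hM a i t) (pow_nn hM b t j)) (Finset.mem_univ m)
  exact lt_of_lt_of_le (mul_pos h1 h2) hle

theorem split (hM : ∀ i j, 0 ≤ M i j) {a b : ℕ} {i j : Fin n}
    (h : 0 < (M ^ (a + b)) i j) : ∃ m, 0 < (M ^ a) i m ∧ 0 < (M ^ b) m j := by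
  by_contra hcon
  push_neg at hcon
  rw [pow_add, Matrix.mul_apply] at h
  have : ∑ t, (M ^ a) i t * (M ^ b) t j = 0 := by
    apply Finset.sum_eq_zero
    intro t _
    rcases lt_or_eq_of_le (pow_nn hM a i t) with hpos | hz
    · have hz2 : (M ^ b) t j = 0 := le_antisymm (hcon t hpos) (pow_nn hM b t j)
      rw [hz2, mul_zero]
    · rw [← hz, zero_mul]
  rw [this] at h
  exact lt_irrefl 0 h

theorem toSeq (hM : ∀ i j, 0 ≤ M i j) :
    ∀ (m : ℕ) (i j : Fin n), 0 < (M ^ m) i j →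
      ∃ v : ℕ → Fin n, v 0 = i ∧ v m = j ∧ ∀ t < m, 0 < M (v t) (v (t + 1)) := by
  intro m
  induction m with
  | zero =>
    intro i j h
    have : i = j := by
      by_contra hne
      rw [pow_zero, Matrix.one_apply_ne hne] at h
      exact lt_irrefl 0 h
    exact ⟨fun _ => i, rfl, this ▸ rfl, fun t ht => absurd ht (Nat.not_lt_zero t)⟩
  | succ m ih =>
    intro i j h
    obtain ⟨u, hu1, hu2⟩ := split hM (a := m) (b := 1) h
    rw [pow_one] at hu2
    obtain ⟨v, hv0, hvm, hvstep⟩ := ih i u hu1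
    refine ⟨fun t => if t ≤ m then v t else j, by simp [hv0], by simp, ?_⟩
    intro t ht
    rcases Nat.lt_or_ge t m with h1 | h1
    · simpa [Nat.le_of_lt h1, Nat.succ_le_of_lt h1] using hvstep t h1
    · have : t = m := Nat.le_antisymm (Nat.lt_succ_iff.1 ht) h1
      subst this
      simpa [hvm] using hu2

theorem seg (hM : ∀ i j, 0 ≤ M i j) {v : ℕ → Fin n} {m : ℕ}
    (hstep : ∀ t < m, 0 < M (v t) (v (t + 1))) :
    ∀ d a, a + d ≤ m → 0 < (M ^ d) (v a) (v (a + d)) := by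
  intro d
  induction d with
  | zero => intro a _; simp [Matrix.one_apply]
  | succ d ih =>
    intro a ha
    have h1 : 0 < (M ^ d) (v a) (v (a + d)) := ih a (by omega)
    have h2 : 0 < (M ^ 1) (v (a + d)) (v (a + d + 1)) := by
      rw [pow_one]; exact hstep (a + d) (by omega)
    have := comp hM h1 h2
    simpa [Nat.add_assoc] using this


theorem splice (hM : ∀ i j, 0 ≤ M i j) {v : ℕ → Fin n} {m a b : ℕ}
    (hab : a < b) (hbm : b ≤ m) (hv : v a = v b)
    (hstep : ∀ t < m, 0 < M (v t) (v (t + 1))) :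
    0 < (M ^ (m - (b - a))) (v 0) (v m) := by
  set u : ℕ → Fin n := fun t => if t < a then v t else v (t + (b - a)) with hu
  have hstep' : ∀ t < m - (b - a), 0 < M (u t) (u (t + 1)) := by
    intro t ht
    rcases Nat.lt_or_ge t a with h1 | h1
    · have hut : u t = v t := by simp [hu, h1]
      have hut1 : u (t + 1) = v (t + 1) := by
        rcases Nat.lt_or_ge (t + 1) a with h2 | h2
        · simp [hu, h2]
        · have h3 : ¬ (t + 1 < a) := by omega
          simp only [hu, if_neg h3]
          rw [show t + 1 + (b - a) = b by omega, ← hv]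
          congr 1
          omega
      rw [hut, hut1]
      exact hstep t (by omega)
    · have hut : u t = v (t + (b - a)) := by simp [hu, Nat.not_lt.2 h1]
      have hut1 : u (t + 1) = v (t + 1 + (b - a)) := by
        have : ¬ (t + 1 < a) := by omega
        simp [hu, this]
      rw [hut, hut1, show t + 1 + (b - a) = t + (b - a) + 1 by omega]
      exact hstep (t + (b - a)) (by omega)
  have hu0 : u 0 = v 0 := by
    rcases Nat.eq_zero_or_pos a with h | h
    · subst h
      simp only [hu, lt_irrefl, if_neg (lt_irrefl _)]
      rw [show 0 + (b - 0) = b by omega, ← hv]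
    · simp [hu, h]
  have hum : u (m - (b - a)) = v m := by
    have h1 : ¬ (m - (b - a) < a) := by omega
    simp only [hu, if_neg h1]
    congr 1
    omega
  have := seg hM hstep' (m - (b - a)) 0 (by omega)
  rw [Nat.zero_add, hu0, hum] at this
  exact this

theorem shorten (hM : ∀ i j, 0 ≤ M i j) :
    ∀ (m : ℕ) (i j : Fin n), 0 < (M ^ m) i j → ∃ q ≤ n - 1, 0 < (M ^ q) i j := by
  intro m
  induction m using Nat.strong_induction_on with
  | _ m ih =>
    intro i j h
    rcases Nat.lt_or_ge (n - 1) m with hlt | hge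
    · have hn : 0 < n := i.pos
      have hnm : n ≤ m := by omega
      obtain ⟨v, hv0, hvm, hvstep⟩ := toSeq hM m i j h
      obtain ⟨x, y, hxy, hfeq⟩ := Fintype.exists_ne_map_eq_of_card_lt
        (fun t : Fin (n + 1) => v t) (by simp)
      rcases Ne.lt_or_gt hxy with hlt2 | hlt2
      · have := splice hM (a := (x:ℕ)) (b := (y:ℕ)) hlt2 (by omega) hfeq hvstep
        rw [hv0, hvm] at this
        exact ih (m - (y - x)) (by have := y.isLt; omega) i j this
      · have := splice hM (a := (y:ℕ)) (b := (x:ℕ)) hlt2 (by omega) hfeq.symm hvstep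
        rw [hv0, hvm] at this
        exact ih (m - (x - y)) (by have := x.isLt; omega) i j this
    · exact ⟨m, hge, h⟩

theorem loop_pow (hM : ∀ i j, 0 ≤ M i j) {s : ℕ} {w : Fin n}
    (h : 0 < (M ^ s) w w) : ∀ m, 0 < (M ^ (s * m)) w w := by
  intro m
  induction m with
  | zero => simp [Matrix.one_apply]
  | succ m ih =>
    have := comp hM ih h
    rw [show s * m + s = s * (m + 1) by ring] at this
    exact this


end WielandtAux

open WielandtAux

/-- Wielandt bound: the exponent of an `n × n` primitive nonnegative matrix is
at most `(n-1)^2 + 1`. -/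
theorem wielandt_bound {n : ℕ} (A : Matrix (Fin n) (Fin n) ℝ)
    (hA : IsPrimitive A) (e : ℕ) (he : ExpIs A e) :
    e ≤ (n - 1) ^ 2 + 1 := by
  classical
  obtain ⟨hnn, k, hk, hkpos⟩ := hA
  rcases Nat.lt_or_ge n 2 with hn | hn
  · -- small cases n = 0, 1
    have h1 : (1 : ℕ) ∈ {m : ℕ | 0 < m ∧ ∀ i j, 0 < (A ^ m) i j} := by
      refine ⟨one_pos, fun i j => ?_⟩
      have hij : i = j := Fin.ext (by have := i.isLt; have := j.isLt; omega)
      subst hij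
      have hki := hkpos i i
      rw [show k = 1 + (k - 1) by omega] at hki
      obtain ⟨m, hm1, _⟩ := split hnn hki
      have hmi : m = i := Fin.ext (by have := m.isLt; have := i.isLt; omega)
      rwa [hmi] at hm1
    exact le_trans (he.2 h1) (Nat.le_add_left 1 _)
  · have hn0 : 0 < n := by omega
    have hrow : ∀ i : Fin n, ∃ j, 0 < A i j := by
      intro i
      have hki := hkpos i i
      rw [show k = 1 + (k - 1) by omega] at hki
      obtain ⟨m, hm1, _⟩ := split hnn hki
      rw [pow_one] at hm1
      exact ⟨m, hm1⟩
    have hmono : ∀ m, k ≤ m → ∀ i j, 0 < (A ^ m) i j := by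
      intro m hm
      induction m, hm using Nat.le_induction with
      | base => exact hkpos
      | succ m hm ih =>
        intro i j
        obtain ⟨t, ht⟩ := hrow i
        have h1 : 0 < (A ^ 1) i t := by rwa [pow_one]
        have h2 := comp hnn h1 (ih t j)
        rwa [show 1 + m = m + 1 by omega] at h2
    have hPex : ∃ m, 0 < m ∧ ∃ w : Fin n, 0 < (A ^ m) w w :=
      ⟨k, hk, ⟨⟨0, hn0⟩, hkpos _ _⟩⟩
    set s := Nat.find hPex with hs_def
    obtain ⟨hs1, v, hv⟩ : 0 < s ∧ ∃ w : Fin n, 0 < (A ^ s) w w := Nat.find_spec hPex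
    have hmin : ∀ m, m < s → ¬(0 < m ∧ ∃ w : Fin n, 0 < (A ^ m) w w) :=
      fun m hm => Nat.find_min hPex hm
    obtain ⟨c, hc0, hcs, hcstep⟩ := toSeq hnn s v v hv
    have hcinj : ∀ a b, a < b → b < s → c a ≠ c b := by
      intro a b hab hbs heq
      have h1 := seg hnn hcstep (b - a) a (by omega)
      rw [show a + (b - a) = b by omega, ← heq] at h1
      exact hmin (b - a) (by omega) ⟨by omega, c a, h1⟩
    have hloop : ∀ t, t < s → 0 < (A ^ s) (c t) (c t) := by
      intro t ht
      have h1 := seg hnn hcstep (s - t) t (by omega)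
      have h2 := seg hnn hcstep t 0 (by omega)
      rw [show t + (s - t) = s by omega, hcs] at h1
      rw [Nat.zero_add, hc0] at h2
      have h3 := comp hnn h1 h2
      rwa [show s - t + t = s by omega] at h3
    have hreach : ∀ d a, a < s → ∃ b, b < s ∧ 0 < (A ^ d) (c a) (c b) := by
      intro d
      induction d with
      | zero => intro a ha; exact ⟨a, ha, by simp [Matrix.one_apply]⟩
      | succ d ih =>
        intro a ha
        obtain ⟨b, hb, hw⟩ := ih a ha
        have hstep1 : 0 < (A ^ 1) (c b) (c (b + 1)) := by
          rw [pow_one]; exact hcstep b hb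
        have hcomp := comp hnn hw hstep1
        rcases Nat.lt_or_ge (b + 1) s with h | h
        · exact ⟨b + 1, h, hcomp⟩
        · have hbs : b + 1 = s := by omega
          refine ⟨0, hs1, ?_⟩
          rwa [hbs, hcs, ← hc0] at hcomp
    have hsn : s ≤ n := by
      by_contra hcon
      push_neg at hcon
      obtain ⟨x, y, hxy, hfeq⟩ := Fintype.exists_ne_map_eq_of_card_lt
        (fun t : Fin (n + 1) => c t) (by simp)
      have hxy' : (x : ℕ) ≠ (y : ℕ) := fun h => hxy (Fin.ext h)
      rcases Ne.lt_or_gt hxy' with h | h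
      · exact hcinj x y h (by have := y.isLt; omega) hfeq
      · exact hcinj y x h (by have := x.isLt; omega) hfeq.symm
    have hsn1 : s ≤ n - 1 := by
      by_contra hcon
      have hsEq : s = n := by omega
      have hdvd : ∀ m, 0 < m → ∀ w : Fin n, 0 < (A ^ m) w w → n ∣ m := by
        intro m
        induction m using Nat.strong_induction_on with
        | _ m ih =>
          intro hm w hw
          obtain ⟨u, hu0, hum, hustep⟩ := toSeq hnn m w w hw
          by_cases hrep : ∃ a b, a < b ∧ b ≤ m ∧ (a ≠ 0 ∨ b ≠ m) ∧ u a = u b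
          · obtain ⟨a, b, hab, hbm, hne, hueq⟩ := hrep
            have hba : b - a < m := by rcases hne with h | h <;> omega
            have hw1 : 0 < (A ^ (b - a)) (u a) (u a) := by
              have h1 := seg hnn hustep (b - a) a (by omega)
              rwa [show a + (b - a) = b by omega, ← hueq] at h1
            have hd1 : n ∣ (b - a) := ih (b - a) hba (by omega) (u a) hw1
            have hw2 := splice hnn hab hbm hueq hustep
            rw [hu0, hum] at hw2
            have hd2 : n ∣ (m - (b - a)) :=
              ih (m - (b - a)) (by omega) (by omega) w hw2
            have hmeq : m = (b - a) + (m - (b - a)) := by omega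
            rw [hmeq]
            exact dvd_add hd1 hd2
          · push_neg at hrep
            have hinj : Function.Injective (fun t : Fin m => u t) := by
              intro x y hxy2
              by_contra hne2
              have hne3 : (x : ℕ) ≠ (y : ℕ) := fun h => hne2 (Fin.ext h)
              rcases Ne.lt_or_gt hne3 with h | h
              · exact absurd hxy2
                  (hrep x y h (by omega) (Or.inr (by have := y.isLt; omega)))
              · exact absurd hxy2.symm
                  (hrep y x h (by omega) (Or.inr (by have := x.isLt; omega)))
            have hmn : m ≤ n := by simpa using Fintype.card_le_of_injective _ hinj
            have hms : s ≤ m := by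
              by_contra h2
              exact hmin m (by omega) ⟨hm, w, hw⟩
            have hmeq : m = n := by omega
            rw [hmeq]
      have hd1 : n ∣ k := hdvd k hk v (hkpos v v)
      have hd2 : n ∣ (k + 1) := hdvd (k + 1) (by omega) v (hmono (k + 1) (by omega) v v)
      have hd3 : n ∣ 1 := by
        have := Nat.dvd_sub hd2 hd1
        simpa using this
      have := Nat.le_of_dvd one_pos hd3
      omega
    -- main positivity at length N
    have hmain : ∀ i j, 0 < (A ^ ((n - s) + s * (n - 1))) i j := by
      intro i j
      have hex : ∃ p, ∃ t, t < s ∧ 0 < (A ^ p) i (c t) :=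
        ⟨k, 0, hs1, by rw [hc0]; exact hkpos i v⟩
      obtain ⟨t, ht, hwalk⟩ : ∃ t, t < s ∧ 0 < (A ^ (Nat.find hex)) i (c t) :=
        Nat.find_spec hex
      have hpmin : ∀ q, q < Nat.find hex → ¬∃ t', t' < s ∧ 0 < (A ^ q) i (c t') :=
        fun q hq => Nat.find_min hex hq
      have hple : Nat.find hex ≤ n - s := by
        by_contra hcon
        push_neg at hcon
        obtain ⟨u, hu0, hup, hustep⟩ := toSeq hnn _ i (c t) hwalk
        have hinjU : ∀ a b, a < b → b < Nat.find hex → u a ≠ u b := by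
          intro a b hab hbp heq
          have h1 := splice hnn hab (by omega) heq hustep
          rw [hu0, hup] at h1
          exact hpmin _ (by omega) ⟨t, ht, h1⟩
        have havoid : ∀ a, a < Nat.find hex → ∀ t', t' < s → u a ≠ c t' := by
          intro a ha t' ht' heq
          have h1 := seg hnn hustep a 0 (by omega)
          rw [Nat.zero_add, hu0, heq] at h1
          exact hpmin a ha ⟨t', ht', h1⟩
        have hcard1 : ((Finset.range (Nat.find hex)).image (fun a => u a)).card
            = Nat.find hex := by
          rw [Finset.card_image_of_injOn, Finset.card_range]
          intro a ha b hb hab2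
          by_contra hne2
          simp only [Finset.mem_range, Finset.mem_coe] at ha hb
          rcases Ne.lt_or_gt hne2 with h | h
          · exact hinjU a b h hb hab2
          · exact hinjU b a h ha hab2.symm
        have hcard2 : ((Finset.range s).image (fun a => c a)).card = s := by
          rw [Finset.card_image_of_injOn, Finset.card_range]
          intro a ha b hb hab2
          by_contra hne2
          simp only [Finset.mem_range, Finset.mem_coe] at ha hb
          rcases Ne.lt_or_gt hne2 with h | h
          · exact hcinj a b h hb hab2
          · exact hcinj b a h ha hab2.symm
        have hdisj : Disjoint ((Finset.range (Nat.find hex)).image (fun a => u a))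
            ((Finset.range s).image (fun a => c a)) := by
          rw [Finset.disjoint_left]
          intro x hx1 hx2
          obtain ⟨a, ha, hax⟩ := Finset.mem_image.1 hx1
          obtain ⟨t', ht', htx⟩ := Finset.mem_image.1 hx2
          rw [Finset.mem_range] at ha ht'
          exact havoid a ha t' ht' (hax.trans htx.symm)
        have hcu := Finset.card_union_of_disjoint hdisj
        have hle2 := Finset.card_le_univ (((Finset.range (Nat.find hex)).image
            (fun a => u a)) ∪ ((Finset.range s).image (fun a => c a)))
        rw [Fintype.card_fin] at hle2
        rw [hcu, hcard1, hcard2] at hle2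
        omega
      obtain ⟨b, hb, hw2⟩ := hreach (n - s - Nat.find hex) t ht
      have hw3 : 0 < (A ^ (n - s)) i (c b) := by
        have h1 := comp hnn hwalk hw2
        rwa [show Nat.find hex + (n - s - Nat.find hex) = n - s by omega] at h1
      have hBnn : ∀ x y, 0 ≤ (A ^ s) x y := fun x y => pow_nn hnn s x y
      have hBk : 0 < ((A ^ s) ^ k) (c b) j := by
        rw [← pow_mul]
        exact hmono (s * k) (Nat.le_mul_of_pos_left k hs1) _ _
      obtain ⟨q, hq, hqw⟩ := shorten hBnn k (c b) j hBk
      have hBloop : 0 < ((A ^ s) ^ (n - 1 - q)) (c b) (c b) := by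
        rw [← pow_mul]
        exact loop_pow hnn (hloop b hb) (n - 1 - q)
      have hBfull : 0 < ((A ^ s) ^ (n - 1)) (c b) j := by
        have h1 := comp hBnn hBloop hqw
        rwa [show (n - 1 - q) + q = n - 1 by omega] at h1
      have hw4 : 0 < (A ^ (s * (n - 1))) (c b) j := by rwa [← pow_mul] at hBfull
      exact comp hnn hw3 hw4
    have hNin : ((n - s) + s * (n - 1)) ∈ {m : ℕ | 0 < m ∧ ∀ i j, 0 < (A ^ m) i j} :=
      ⟨by omega, hmain⟩
    have heN := he.2 hNin
    have harith : (n - s) + s * (n - 1) ≤ (n - 1) ^ 2 + 1 := by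
      obtain ⟨a, rfl⟩ : ∃ a, n = a + 2 := ⟨n - 2, by omega⟩
      have h1 : s ≤ a + 1 := by omega
      rw [show a + 2 - 1 = a + 1 by omega]
      have e1 : (a + 2 - s) + s * (a + 1) = a + 2 + s * a := by
        have h2 : s * (a + 1) = s * a + s := by ring
        omega
      have e2 : a + 2 + s * a ≤ a + 2 + (a + 1) * a := by
        have := Nat.mul_le_mul_right a h1
        omega
      have e3 : a + 2 + (a + 1) * a = (a + 1) ^ 2 + 1 := by ring
      omega
    exact le_trans heN harith
end

section
/- Let A be an n×n symmetric nonnegative matrix. If A is primitive, then the associated graph D(A) (with an edge {i,j} whenever a_{ij} > 0) is connected and contains a closed walk of odd length; conversely, if D(A) is connected and contains a cycle of odd length, then A is primitive. -/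
section Aux

variable {n : ℕ} (A : Matrix (Fin n) (Fin n) ℝ)

lemma pow_entry_nonneg (hnn : ∀ i j, 0 ≤ A i j) : ∀ k (i j : Fin n), 0 ≤ (A ^ k) i j := by
  intro k
  induction k with
  | zero =>
    intro i j
    rw [pow_zero, Matrix.one_apply]
    split <;> norm_num
  | succ k ih =>
    intro i j
    rw [pow_succ, Matrix.mul_apply]
    exact Finset.sum_nonneg fun p _ => mul_nonneg (ih i p) (hnn p j)

lemma pow_entry_pos_add (hnn : ∀ i j, 0 ≤ A i j) {a b : ℕ} {i p j : Fin n}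
    (ha : 0 < (A ^ a) i p) (hb : 0 < (A ^ b) p j) : 0 < (A ^ (a + b)) i j := by
  rw [pow_add, Matrix.mul_apply]
  refine Finset.sum_pos'
    (fun q _ => mul_nonneg (pow_entry_nonneg A hnn a i q) (pow_entry_nonneg A hnn b q j))
    ⟨p, Finset.mem_univ p, mul_pos ha hb⟩

lemma pow_entry_symm (hsymm : A.IsSymm) (k : ℕ) (i j : Fin n) :
    (A ^ k) j i = (A ^ k) i j := (hsymm.pow k).apply i j

lemma row_pos_of_pow (hnn : ∀ i j, 0 ≤ A i j) {k : ℕ} {i j : Fin n} (hk : 0 < k)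
    (h : 0 < (A ^ k) i j) : ∃ p, 0 < A i p := by
  by_contra hcon
  push_neg at hcon
  obtain ⟨s, rfl⟩ := Nat.exists_eq_succ_of_ne_zero hk.ne'
  have hz : ∀ p, A i p = 0 := fun p => le_antisymm (hcon p) (hnn i p)
  rw [pow_succ', Matrix.mul_apply] at h
  simp only [hz, zero_mul, Finset.sum_const_zero] at h
  exact lt_irrefl 0 h

end Aux

/-- A symmetric nonnegative matrix is primitive iff its graph is connected
(every pair of vertices is joined by a walk) and has a closed walk of odd
length. -/
theorem primitive_iff_connected_and_odd_closed_walk {n : ℕ} (hn : 0 < n)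
    (A : Matrix (Fin n) (Fin n) ℝ) (hsymm : A.IsSymm) (hnn : ∀ i j, 0 ≤ A i j) :
    IsPrimitive A ↔
      ((∀ i j : Fin n, ∃ k : ℕ, 0 < (A ^ k) i j) ∧
        (∃ (i : Fin n) (k : ℕ), Odd k ∧ 0 < (A ^ k) i i)) := by
  constructor
  · rintro ⟨-, k, hk, hpos⟩
    refine ⟨fun i j => ⟨k, hpos i j⟩, ?_⟩
    obtain ⟨i0, -⟩ := Finset.univ_nonempty_iff.mpr (Fin.pos_iff_nonempty.mp hn) |>.exists_mem
    rcases Nat.even_or_odd k with he | ho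
    · -- k even, use k+1
      obtain ⟨p, hp⟩ := row_pos_of_pow A hnn hk (hpos i0 i0)
      have hpi : 0 < (A ^ 1) i0 p := by rwa [pow_one]
      have hcomp : 0 < (A ^ (1 + k)) i0 i0 := pow_entry_pos_add A hnn hpi (hpos p i0)
      have hodd : Odd (1 + k) := by
        rcases he with ⟨t, ht⟩
        exact ⟨t, by omega⟩
      exact ⟨i0, 1 + k, hodd, hcomp⟩
    · exact ⟨i0, k, ho, hpos i0 i0⟩
  · rintro ⟨hc, i0, m, hm, hm0⟩
    refine ⟨hnn, ?_⟩
    have hm1 : 0 < m := hm.pos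
    -- every row has a positive entry
    have hrow : ∀ i, ∃ p, 0 < A i p := by
      intro i
      obtain ⟨k, hk⟩ := hc i i0
      rcases Nat.eq_zero_or_pos k with rfl | hkpos
      · have : i = i0 := by
          by_contra hne
          rw [pow_zero, Matrix.one_apply_ne hne] at hk
          exact lt_irrefl 0 hk
        subst this
        exact row_pos_of_pow A hnn hm1 hm0
      · exact row_pos_of_pow A hnn hkpos hk
    -- A^2 has positive diagonal
    have h2 : ∀ i, 0 < (A ^ 2) i i := by
      intro i
      obtain ⟨p, hp⟩ := hrow i
      have hp' : 0 < A p i := by rw [hsymm.apply i p]; exact hp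
      have := pow_entry_pos_add A hnn (a := 1) (b := 1) (p := p)
        (by rwa [pow_one]) (by rwa [pow_one])
      simpa using this
    -- step by 2
    have hstep : ∀ (c : ℕ) (i j : Fin n), 0 < (A ^ c) i j → ∀ s, 0 < (A ^ (c + 2 * s)) i j := by
      intro c i j hc0 s
      induction s with
      | zero => simpa using hc0
      | succ s ih =>
        have : 0 < (A ^ (c + 2 * s + 2)) i j := pow_entry_pos_add A hnn ih (h2 j)
        have heq : c + 2 * (s + 1) = c + 2 * s + 2 := by ring
        rwa [heq]
    -- for each pair, eventually positive
    have hkey : ∀ i j : Fin n, ∃ N, ∀ k, N ≤ k → 0 < (A ^ k) i j := by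
      intro i j
      obtain ⟨k1, hk1⟩ := hc i j
      obtain ⟨k2, hk2⟩ := hc j i0
      have hk2' : 0 < (A ^ k2) i0 j := by rwa [pow_entry_symm A hsymm]
      -- positivity at k1 + k2 + m + k2
      have hodd : 0 < (A ^ (k1 + (k2 + (m + k2)))) i j :=
        pow_entry_pos_add A hnn hk1
          (pow_entry_pos_add A hnn hk2 (pow_entry_pos_add A hnn hm0 hk2'))
      refine ⟨k1 + m + 2 * k2, fun k hk => ?_⟩
      have hk1k : k1 ≤ k := le_trans (by omega) hk
      rcases Nat.even_or_odd (k - k1) with ⟨s, hs⟩ | ⟨s, hs⟩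
      · have : k = k1 + 2 * s := by omega
        rw [this]
        exact hstep k1 i j hk1 s
      · -- k - k1 odd; since m odd, k - (k1 + m + 2*k2) is even
        have hmod : ∃ t, k = (k1 + (k2 + (m + k2))) + 2 * t := by
          obtain ⟨m', hm'⟩ := hm
          refine ⟨(k - (k1 + m + 2 * k2)) / 2, by omega⟩
        obtain ⟨t, ht⟩ := hmod
        rw [ht]
        exact hstep _ i j hodd t
    choose N hN using hkey
    refine ⟨(Finset.univ.sup fun p : Fin n × Fin n => N p.1 p.2) + 1, Nat.succ_pos _, ?_⟩
    intro i j
    apply hN i j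
    have : N i j ≤ Finset.univ.sup fun p : Fin n × Fin n => N p.1 p.2 :=
      Finset.le_sup (f := fun p : Fin n × Fin n => N p.1 p.2) (Finset.mem_univ (i, j))
    omega
end

section
/- Let A be a symmetric primitive nonnegative matrix, and let ℓ be the length of a shortest walk from i to j in D(A) whose parity differs from the parity of the distance d(i,j). Then exp(A:i,j) = ℓ − 1. -/
/-- If `d` is the distance from `i` to `j` and `l` is the length of a shortest
walk from `i` to `j` whose parity differs from that of `d`, then
`exp(A : i, j) = l - 1` : walks of every length `≥ l - 1` exist and `l - 1` is
least with this property. -/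
theorem localExp_eq_shortest_odd_parity_walk_sub_one {n : ℕ}
    (A : Matrix (Fin n) (Fin n) ℝ) (hsymm : A.IsSymm) (hA : IsPrimitive A)
    (i j : Fin n) (d l : ℕ)
    (hd : IsLeast {k : ℕ | 0 < (A ^ k) i j} d)
    (hl : IsLeast {k : ℕ | 0 < (A ^ k) i j ∧ ¬ (k % 2 = d % 2)} l) :
    IsLeast {k : ℕ | ∀ m : ℕ, k ≤ m → 0 < (A ^ m) i j} (l - 1) := by
  obtain ⟨hnn, K, hKpos, hKall⟩ := hA
  -- all entries of all powers are nonnegative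
  have hpownn : ∀ (k : ℕ) (a b : Fin n), 0 ≤ (A ^ k) a b := by
    intro k
    induction k with
    | zero =>
      intro a b
      simp [Matrix.one_apply]
      split <;> norm_num
    | succ m ih =>
      intro a b
      rw [pow_succ', Matrix.mul_apply]
      exact Finset.sum_nonneg fun t _ => mul_nonneg (hnn a t) (ih t b)
  -- there is an edge at i
  have hedge : ∃ t, 0 < A i t := by
    by_contra h
    push_neg at h
    have hz : ∀ t, A i t = 0 := fun t => le_antisymm (h t) (hnn i t)
    have hKi := hKall i i
    obtain ⟨K', rfl⟩ : ∃ K', K = K' + 1 := ⟨K - 1, by omega⟩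
    rw [pow_succ'] at hKi
    have : (∑ t, A i t * (A ^ K') t i) = 0 := by
      apply Finset.sum_eq_zero
      intro t _
      rw [hz t, zero_mul]
    rw [Matrix.mul_apply] at hKi
    rw [this] at hKi
    exact lt_irrefl 0 hKi
  obtain ⟨t0, ht0⟩ := hedge
  -- (A^2) i i > 0
  have hAii : 0 < (A ^ 2) i i := by
    rw [pow_two, Matrix.mul_apply]
    apply Finset.sum_pos'
    · intro t _
      exact mul_nonneg (hnn i t) (hnn t i)
    · refine ⟨t0, Finset.mem_univ _, ?_⟩
      have : A t0 i = A i t0 := by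
        have := hsymm
        rw [Matrix.IsSymm] at this
        exact congrFun (congrFun this.symm t0) i
      rw [this]
      exact mul_pos ht0 ht0
  -- positivity propagates in steps of 2
  have step : ∀ k : ℕ, 0 < (A ^ k) i j → 0 < (A ^ (k + 2)) i j := by
    intro k hk
    have : A ^ (k + 2) = A ^ 2 * A ^ k := by rw [← pow_add]; ring_nf
    rw [this, Matrix.mul_apply]
    apply Finset.sum_pos'
    · intro t _
      exact mul_nonneg (hpownn 2 i t) (hpownn k t j)
    · exact ⟨i, Finset.mem_univ _, mul_pos hAii hk⟩
  have iter : ∀ (t a : ℕ), 0 < (A ^ a) i j → 0 < (A ^ (a + 2 * t)) i j := by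
    intro t
    induction t with
    | zero => intro a ha; simpa using ha
    | succ s ih =>
      intro a ha
      have := step _ (ih a ha)
      have heq : a + 2 * (s + 1) = a + 2 * s + 2 := by ring
      rw [heq]
      exact this
  have hdpos := hd.1
  have hlpos := hl.1.1
  have hlpar := hl.1.2
  have hdl : d < l := by
    have hle : d ≤ l := hd.2 hl.1.1
    rcases lt_or_eq_of_le hle with h | h
    · exact h
    · exact absurd (h ▸ rfl) hlpar
  constructor
  · -- membership: every m ≥ l - 1 has positive entry
    intro m hm
    by_cases hpar : m % 2 = d % 2
    · -- m = d + 2t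
      have hmd : d ≤ m := by omega
      obtain ⟨t, rfl⟩ : ∃ t, m = d + 2 * t := ⟨(m - d) / 2, by omega⟩
      exact iter t d hdpos
    · -- m has parity of l, so m ≥ l, m = l + 2t
      have hml : l ≤ m := by omega
      obtain ⟨t, rfl⟩ : ∃ t, m = l + 2 * t := ⟨(m - l) / 2, by omega⟩
      exact iter t l hlpos
  · -- lower bound
    intro k hk
    by_contra hlt
    push_neg at hlt
    have hkl : k < l - 1 := hlt
    set m := if k % 2 = d % 2 then k + 1 else k with hm
    have hkm : k ≤ m := by rw [hm]; split <;> omega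
    have hmpar : ¬ (m % 2 = d % 2) := by rw [hm]; split <;> omega
    have hml : m < l := by rw [hm]; split <;> omega
    have hpos := hk m hkm
    have := hl.2 ⟨hpos, hmpar⟩
    omega
end

section
/- For every n ≥ 2, if A is a primitive symmetric companion matrix of order n (i.e., A = C + Cᵀ for a (0,1) companion matrix C), then exp(A) ∈ {2, 4, ..., 2n−2}; i.e., exp(A) is even and at most 2(n−1). -/
/-- A `(0,1)` companion matrix: superdiagonal entries `1` and all other entries
`0` in the first `n-1` rows; last-row entries in `{0,1}`. -/
def IsCompanion {n : ℕ} (C : Matrix (Fin n) (Fin n) ℝ) : Prop :=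
  ∀ i j : Fin n,
    if (i : ℕ) + 1 < n then (C i j = if (j : ℕ) = (i : ℕ) + 1 then 1 else 0)
    else (C i j = 0 ∨ C i j = 1)

/-- The set `C_n^{α,ε}` of symmetric companion matrices `C + Cᵀ` with
`c_{n,1} = α` and `c_{n,n} = ε`. -/
def companionClass (n : ℕ) (hn : 0 < n) (α ε : ℝ) :
    Set (Matrix (Fin n) (Fin n) ℝ) :=
  {A | ∃ C : Matrix (Fin n) (Fin n) ℝ, IsCompanion C ∧
    C ⟨n - 1, by omega⟩ ⟨0, hn⟩ = α ∧ C ⟨n - 1, by omega⟩ ⟨n - 1, by omega⟩ = ε ∧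
    A = C + C.transpose}

/-- `mRun S` : the maximum length of a run of consecutive integers contained in
`S` (`0` for the empty set). -/
noncomputable def mRun (S : Set ℕ) : ℕ := sSup {L : ℕ | ∃ a : ℕ, ∀ t, t < L → a + t ∈ S}

/-- The exponent set of a family of matrices. -/
def expSet {n : ℕ} (X : Set (Matrix (Fin n) (Fin n) ℝ)) : Set ℕ :=
  {e | ∃ A ∈ X, IsPrimitive A ∧ ExpIs A e}

section Aux

variable {n : ℕ}

lemma powEntryNonneg {A : Matrix (Fin n) (Fin n) ℝ} (hA : ∀ i j, 0 ≤ A i j) :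
    ∀ (k : ℕ) (i j : Fin n), 0 ≤ (A ^ k) i j := by
  intro k
  induction k with
  | zero =>
    intro i j
    rw [pow_zero]
    by_cases h : i = j <;> simp [Matrix.one_apply, h]
  | succ k ih =>
    intro i j
    rw [pow_succ, Matrix.mul_apply]
    exact Finset.sum_nonneg fun l _ => mul_nonneg (ih i l) (hA l j)

lemma powConcat {A : Matrix (Fin n) (Fin n) ℝ} (hA : ∀ i j, 0 ≤ A i j)
    {p q : ℕ} {i l j : Fin n} (h1 : 0 < (A ^ p) i l) (h2 : 0 < (A ^ q) l j) :
    0 < (A ^ (p + q)) i j := by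
  rw [pow_add, Matrix.mul_apply]
  exact Finset.sum_pos'
    (fun x _ => mul_nonneg (powEntryNonneg hA p i x) (powEntryNonneg hA q x j))
    ⟨l, Finset.mem_univ l, mul_pos h1 h2⟩

lemma powStepExists {A : Matrix (Fin n) (Fin n) ℝ} (hA : ∀ i j, 0 ≤ A i j)
    {k : ℕ} {i j : Fin n} (h : 0 < (A ^ (k + 1)) i j) :
    ∃ l, 0 < (A ^ k) i l ∧ 0 < A l j := by
  rw [pow_succ, Matrix.mul_apply] at h
  by_contra hc
  push_neg at hc
  have hz : ∀ l ∈ Finset.univ, (A ^ k) i l * A l j = (0:ℝ) := by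
    intro l _
    rcases lt_or_eq_of_le (powEntryNonneg hA k i l) with hl | hl
    · rw [le_antisymm (hc l hl) (hA l j), mul_zero]
    · rw [← hl, zero_mul]
  rw [Finset.sum_eq_zero hz] at h
  exact lt_irrefl 0 h

lemma powSymm {A : Matrix (Fin n) (Fin n) ℝ} (hs : A.transpose = A) (k : ℕ)
    (i j : Fin n) : (A ^ k) i j = (A ^ k) j i := by
  have h : (A ^ k).transpose = A ^ k := by rw [Matrix.transpose_pow, hs]
  conv_lhs => rw [← h]
  rfl

lemma powPad {A : Matrix (Fin n) (Fin n) ℝ} (hA : ∀ i j, 0 ≤ A i j)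
    (hloop : ∀ i, 0 < (A ^ 2) i i) :
    ∀ (t : ℕ) {L : ℕ} {i j : Fin n}, 0 < (A ^ L) i j → 0 < (A ^ (2 * t + L)) i j := by
  intro t
  induction t with
  | zero => intro L i j h; simpa using h
  | succ t ih =>
    intro L i j h
    have h2 := powConcat hA (hloop i) (ih h)
    rwa [show 2 + (2 * t + L) = 2 * (t + 1) + L by ring] at h2

end Aux

/-- Every primitive symmetric companion matrix of order `n ≥ 2` has even
exponent, which is at least `2` and at most `2(n-1)`. -/
theorem exp_symmetric_companion_even_le {n : ℕ} (hn : 2 ≤ n)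
    (C A : Matrix (Fin n) (Fin n) ℝ) (hC : IsCompanion C)
    (hA : A = C + C.transpose) (hprim : IsPrimitive A) (e : ℕ)
    (he : ExpIs A e) : Even e ∧ 2 ≤ e ∧ e ≤ 2 * (n - 1) := by
  have hn1 : n - 1 < n := by omega
  set w : Fin n := ⟨n - 1, hn1⟩ with hw
  -- basic facts about C and A
  have hCnn : ∀ i j, 0 ≤ C i j := by
    intro i j
    have h := hC i j
    by_cases hi : (i : ℕ) + 1 < n
    · rw [if_pos hi] at h
      rw [h]; split <;> norm_num
    · rw [if_neg hi] at h
      rcases h with h | h <;> rw [h] <;> norm_num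
  have hAe : ∀ i j, A i j = C i j + C j i := by
    intro i j; rw [hA]; simp [Matrix.add_apply, Matrix.transpose_apply]
  have hAnn : ∀ i j, 0 ≤ A i j := fun i j => by
    rw [hAe]; exact add_nonneg (hCnn i j) (hCnn j i)
  have hCsup : ∀ i j : Fin n, (j : ℕ) = (i : ℕ) + 1 → C i j = 1 := by
    intro i j hj
    have hi : (i : ℕ) + 1 < n := by have := j.isLt; omega
    have h := hC i j
    rw [if_pos hi, if_pos hj] at h
    exact h
  have hCpos : ∀ i j : Fin n, 0 < C i j →
      ((j : ℕ) = (i : ℕ) + 1) ∨ ((i : ℕ) = n - 1 ∧ C i j = 1) := by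
    intro i j h
    by_cases hi : (i : ℕ) + 1 < n
    · left
      have h' := hC i j
      rw [if_pos hi] at h'
      by_contra hj
      rw [if_neg hj] at h'
      rw [h'] at h; exact lt_irrefl 0 h
    · right
      refine ⟨by have := i.isLt; omega, ?_⟩
      have h' := hC i j
      rw [if_neg hi] at h'
      rcases h' with h' | h'
      · rw [h'] at h; exact absurd h (lt_irrefl 0)
      · exact h'
  have hApos : ∀ i j : Fin n, (j : ℕ) = (i : ℕ) + 1 → 0 < A i j := by
    intro i j hj
    rw [hAe, hCsup i j hj]
    have := hCnn j i; linarith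
  have hAchord : ∀ a : Fin n, C w a = 1 → 0 < A w a := by
    intro a ha; rw [hAe, ha]; have := hCnn a w; linarith
  have hsymA : ∀ i j, A i j = A j i := by intro i j; rw [hAe, hAe]; ring
  have htrA : A.transpose = A := by
    ext i j; rw [Matrix.transpose_apply]; exact (hsymA i j).symm
  -- edge classification
  have hedge : ∀ l j : Fin n, 0 < A l j →
      ((l : ℕ) + (j : ℕ)) % 2 = 1 ∨ (l = w ∧ C w j = 1) ∨ (j = w ∧ C w l = 1) := by
    intro l j h
    rw [hAe] at h
    have hone : 0 < C l j ∨ 0 < C j l := by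
      by_contra hcon; push_neg at hcon
      have h1 := hCnn l j; have h2 := hCnn j l
      linarith [hcon.1, hcon.2]
    rcases hone with h1 | h1
    · rcases hCpos l j h1 with hj | ⟨hl, honeC⟩
      · left; omega
      · right; left
        have hlw : l = w := Fin.ext (by rw [hw]; exact hl)
        exact ⟨hlw, hlw ▸ honeC⟩
    · rcases hCpos j l h1 with hj | ⟨hl, honeC⟩
      · left; omega
      · right; right
        have hjw : j = w := Fin.ext (by rw [hw]; exact hl)
        exact ⟨hjw, hjw ▸ honeC⟩
  -- path walks
  have hpath : ∀ (d : ℕ) (i j : Fin n), (j : ℕ) = (i : ℕ) + d → 0 < (A ^ d) i j := by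
    intro d
    induction d with
    | zero =>
      intro i j hj
      have hij : i = j := Fin.ext (by omega)
      subst hij
      rw [pow_zero]
      simp [Matrix.one_apply]
    | succ d ih =>
      intro i j hj
      have hi1 : (i : ℕ) + 1 < n := by have := j.isLt; omega
      have h1 : 0 < (A ^ 1) i ⟨(i : ℕ) + 1, hi1⟩ := by
        rw [pow_one]; exact hApos i ⟨(i : ℕ) + 1, hi1⟩ rfl
      have h2 : 0 < (A ^ d) ⟨(i : ℕ) + 1, hi1⟩ j := by
        refine ih _ j ?_
        show (j : ℕ) = (i : ℕ) + 1 + d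
        omega
      have h3 := powConcat hAnn h1 h2
      rwa [show 1 + d = d + 1 by omega] at h3
  have hto : ∀ i : Fin n, 0 < (A ^ (n - 1 - (i : ℕ))) i w := by
    intro i
    refine hpath _ i w ?_
    show n - 1 = (i : ℕ) + (n - 1 - (i : ℕ))
    have := i.isLt; omega
  have hfrom : ∀ j : Fin n, 0 < (A ^ (n - 1 - (j : ℕ))) w j := by
    intro j; rw [powSymm htrA]; exact hto j
  have hloop2 : ∀ i : Fin n, 0 < (A ^ 2) i i := by
    intro i
    by_cases hi : (i : ℕ) + 1 < n
    · have h1 : 0 < (A ^ 1) i ⟨(i : ℕ) + 1, hi⟩ := by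
        rw [pow_one]; exact hApos i ⟨(i : ℕ) + 1, hi⟩ rfl
      have h2 : 0 < (A ^ 1) ⟨(i : ℕ) + 1, hi⟩ i := by
        rw [pow_one, hsymA]; exact hApos i ⟨(i : ℕ) + 1, hi⟩ rfl
      have h3 := powConcat hAnn h1 h2
      rwa [show (1 : ℕ) + 1 = 2 by omega] at h3
    · have hx : (i : ℕ) = ((⟨n - 2, by omega⟩ : Fin n) : ℕ) + 1 := by
        show (i : ℕ) = n - 2 + 1
        have := i.isLt; omega
      have h1 : 0 < (A ^ 1) (⟨n - 2, by omega⟩ : Fin n) i := by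
        rw [pow_one]; exact hApos _ i hx
      have h2 : 0 < (A ^ 1) i (⟨n - 2, by omega⟩ : Fin n) := by
        rw [pow_one, hsymA]; exact hApos _ i hx
      have h3 := powConcat hAnn h2 h1
      rwa [show (1 : ℕ) + 1 = 2 by omega] at h3
  -- decomposition of walks: parity-correct or passing through w
  have hdecomp : ∀ (k : ℕ) (i j : Fin n), 0 < (A ^ k) i j →
      (k + (i : ℕ) + (j : ℕ)) % 2 = 0 ∨
      ∃ p q, p + q = k ∧ 0 < (A ^ p) i w ∧ 0 < (A ^ q) w j := by
    intro k
    induction k with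
    | zero =>
      intro i j h
      left
      have hij : i = j := by
        by_contra hne
        rw [pow_zero, Matrix.one_apply, if_neg hne] at h
        exact lt_irrefl 0 h
      subst hij; omega
    | succ k ih =>
      intro i j h
      obtain ⟨l, h1, h2⟩ := powStepExists hAnn h
      rcases ih i l h1 with hm | ⟨p, q, hpq, hp, hq⟩
      · rcases hedge l j h2 with ho | ⟨hlw, -⟩ | ⟨hjw, -⟩
        · left; omega
        · right
          subst hlw
          exact ⟨k, 1, rfl, h1, by rwa [pow_one]⟩
        · right
          subst hjw
          refine ⟨k + 1, 0, by omega, h, ?_⟩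
          rw [pow_zero]
          simp [Matrix.one_apply]
      · right
        refine ⟨p, q + 1, by omega, hp, ?_⟩
        have h2' : 0 < (A ^ 1) l j := by rwa [pow_one]
        exact powConcat hAnn hq h2'
  -- e is positive and not 1
  have hv0 : 0 < n := by omega
  have hv1 : 1 < n := by omega
  have hA00 : A ⟨0, hv0⟩ ⟨0, hv0⟩ = 0 := by
    have h0 : C ⟨0, hv0⟩ ⟨0, hv0⟩ = 0 := by
      have h := hC ⟨0, hv0⟩ ⟨0, hv0⟩
      rw [if_pos (show (0 : ℕ) + 1 < n by omega)] at h
      rw [h, if_neg (by norm_num)]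
    rw [hAe, h0]; ring
  have hepos : 0 < e := he.1.1
  have hene1 : e ≠ 1 := by
    intro h1
    have h := he.1.2 ⟨0, hv0⟩ ⟨0, hv0⟩
    rw [h1, pow_one, hA00] at h
    exact lt_irrefl 0 h
  -- non-bipartiteness witness: a chord from w of even path-distance
  have hwit : ∃ a : Fin n, C w a = 1 ∧ ((n - 1) + (a : ℕ)) % 2 = 0 := by
    by_contra hno
    push_neg at hno
    have hinv : ∀ (k : ℕ) (i j : Fin n), 0 < (A ^ k) i j →
        (k + (i : ℕ) + (j : ℕ)) % 2 = 0 := by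
      intro k
      induction k with
      | zero =>
        intro i j h
        have hij : i = j := by
          by_contra hne
          rw [pow_zero, Matrix.one_apply, if_neg hne] at h
          exact lt_irrefl 0 h
        subst hij; omega
      | succ k ih =>
        intro i j h
        obtain ⟨l, h1, h2⟩ := powStepExists hAnn h
        have hband := ih i l h1
        rcases hedge l j h2 with ho | ⟨hlw, hcw⟩ | ⟨hjw, hcw⟩
        · omega
        · have hno' := hno j hcw
          have hlval : (l : ℕ) = n - 1 := by rw [hlw]
          omega
        · have hno' := hno l hcw
          have hjval : (j : ℕ) = n - 1 := by rw [hjw]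
          omega
    obtain ⟨k, hk, hkpos⟩ := hprim.2
    have h00 := hinv k ⟨0, hv0⟩ ⟨0, hv0⟩ (hkpos ⟨0, hv0⟩ ⟨0, hv0⟩)
    have h01 := hinv k ⟨0, hv0⟩ ⟨1, hv1⟩ (hkpos ⟨0, hv0⟩ ⟨1, hv1⟩)
    simp only [] at h00 h01
    omega
  obtain ⟨a, ha1, ha2⟩ := hwit
  -- upper bound : A ^ (2*(n-1)) is entrywise positive
  have hupper : ∀ i j : Fin n, 0 < (A ^ (2 * (n - 1))) i j := by
    intro i j
    have hiv := i.isLt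
    have hjv := j.isLt
    have hav := a.isLt
    by_cases hpar : ((i : ℕ) + (j : ℕ)) % 2 = 0
    · have hwalk := powConcat hAnn (hto i) (hfrom j)
      obtain ⟨t, ht⟩ : ∃ t, 2 * t + ((n - 1 - (i : ℕ)) + (n - 1 - (j : ℕ))) = 2 * (n - 1) :=
        ⟨(2 * (n - 1) - ((n - 1 - (i : ℕ)) + (n - 1 - (j : ℕ)))) / 2, by omega⟩
      rw [← ht]
      exact powPad hAnn hloop2 t hwalk
    · obtain ⟨d, hd, hwalkia⟩ : ∃ d : ℕ,
          (((a : ℕ) ≤ (i : ℕ)) ∧ d = (i : ℕ) - (a : ℕ) ∨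
           ((i : ℕ) ≤ (a : ℕ)) ∧ d = (a : ℕ) - (i : ℕ)) ∧ 0 < (A ^ d) i a := by
        rcases le_total (i : ℕ) (a : ℕ) with hle | hle
        · exact ⟨(a : ℕ) - (i : ℕ), Or.inr ⟨hle, rfl⟩, hpath _ i a (by omega)⟩
        · refine ⟨(i : ℕ) - (a : ℕ), Or.inl ⟨hle, rfl⟩, ?_⟩
          rw [powSymm htrA]
          exact hpath _ a i (by omega)
      have hchord : 0 < (A ^ 1) a w := by
        rw [pow_one, hsymA]; exact hAchord a ha1
      have hwalk := powConcat hAnn (powConcat hAnn hwalkia hchord) (hfrom j)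
      obtain ⟨t, ht⟩ : ∃ t, 2 * t + (d + 1 + (n - 1 - (j : ℕ))) = 2 * (n - 1) :=
        ⟨(2 * (n - 1) - (d + 1 + (n - 1 - (j : ℕ)))) / 2, by omega⟩
      rw [← ht]
      exact powPad hAnn hloop2 t hwalk
  have hmemU : 2 * (n - 1) ∈ {k : ℕ | 0 < k ∧ ∀ i j, 0 < (A ^ k) i j} :=
    ⟨by omega, hupper⟩
  have hub : e ≤ 2 * (n - 1) := he.2 hmemU
  -- evenness
  have heven : e % 2 = 0 := by
    by_contra hodd
    have hodd' : e % 2 = 1 := by omega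
    have he3 : 3 ≤ e := by omega
    have key : ∀ i j : Fin n, 0 < (A ^ (e - 1)) i j := by
      intro i j
      obtain ⟨pi, qi, hpqi, hpi, hqi⟩ :
          ∃ p q, p + q = e ∧ 0 < (A ^ p) i w ∧ 0 < (A ^ q) w i := by
        rcases hdecomp e i i (he.1.2 i i) with hm | hd
        · omega
        · exact hd
      obtain ⟨pj, qj, hpqj, hpj, hqj⟩ :
          ∃ p q, p + q = e ∧ 0 < (A ^ p) j w ∧ 0 < (A ^ q) w j := by
        rcases hdecomp e j j (he.1.2 j j) with hm | hd
        · omega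
        · exact hd
      have wito : 0 < (A ^ pi) i w := hpi
      have wifrom : 0 < (A ^ qi) i w := by rw [powSymm htrA]; exact hqi
      have wjfrom : 0 < (A ^ qj) w j := hqj
      have wjfrom2 : 0 < (A ^ pj) w j := by rw [powSymm htrA]; exact hpj
      obtain ⟨L, hLpos, hLeven, hLle⟩ :
          ∃ L, 0 < (A ^ L) i j ∧ L % 2 = 0 ∧ L ≤ e - 1 := by
        by_cases hc : (pi + qj) % 2 = 0
        · by_cases hle : pi + qj ≤ e
          · exact ⟨pi + qj, powConcat hAnn wito wjfrom, hc, by omega⟩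
          · exact ⟨qi + pj, powConcat hAnn wifrom wjfrom2, by omega, by omega⟩
        · by_cases hle : pi + pj ≤ e
          · exact ⟨pi + pj, powConcat hAnn wito wjfrom2, by omega, by omega⟩
          · exact ⟨qi + qj, powConcat hAnn wifrom wjfrom, by omega, by omega⟩
      obtain ⟨t, ht⟩ : ∃ t, 2 * t + L = e - 1 := ⟨(e - 1 - L) / 2, by omega⟩
      rw [← ht]
      exact powPad hAnn hloop2 t hLpos
    have hmemK : e - 1 ∈ {k : ℕ | 0 < k ∧ ∀ i j, 0 < (A ^ k) i j} :=
      ⟨by omega, key⟩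
    have : e ≤ e - 1 := he.2 hmemK
    omega
  exact ⟨Nat.even_iff.mpr heven, by omega, hub⟩
end

section
/- For n ≥ 4 and α ∈ {0,1}, every matrix in C_n^{α,1} is primitive; consequently |PSC_n^{α,1}| = 2^{n−2}. -/
/-! The graph of `C + Cᵀ` contains the path `1 - 2 - ⋯ - n` coming from the superdiagonal of `C`
and, because `c_{n,n} = 1`, a loop at `n`. So any `i` reaches any `j` in exactly `k ≥ 2(n-1)`
steps: walk up to `n`, wait on the loop, walk down to `j`. A matrix of the class is determined by
the last row of `C`, whose first and last entries are prescribed, leaving `n - 2` free bits. -/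

namespace Matrix

variable {ι R : Type*} [Fintype ι] [DecidableEq ι] [CommSemiring R] [PartialOrder R]
  [IsStrictOrderedRing R]

theorem pow_add_apply_pos {A : Matrix ι ι R} (hA : ∀ i j, 0 ≤ A i j) {a b : ℕ} {i k j : ι}
    (hik : 0 < (A ^ a) i k) (hkj : 0 < (A ^ b) k j) : 0 < (A ^ (a + b)) i j := by
  rw [pow_add, mul_apply]
  exact Finset.sum_pos'
    (fun l _ => mul_nonneg (pow_apply_nonneg hA a i l) (pow_apply_nonneg hA b l j))
    ⟨k, Finset.mem_univ k, mul_pos hik hkj⟩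

theorem pow_apply_self_pos {A : Matrix ι ι R} (hA : ∀ i j, 0 ≤ A i j) {k : ι}
    (hk : 0 < A k k) :
    ∀ m : ℕ, 0 < (A ^ m) k k
  | 0 => by simp
  | m + 1 => pow_add_apply_pos hA (pow_apply_self_pos hA hk m) (by rwa [pow_one])

variable {n : ℕ} {A : Matrix (Fin n) (Fin n) R}

theorem pow_apply_pos_of_superdiag_pos (hA : ∀ i j, 0 ≤ A i j)
    (hsup : ∀ i j : Fin n, (j : ℕ) = i + 1 → 0 < A i j) :
    ∀ (d : ℕ) (i j : Fin n), (j : ℕ) = i + d → 0 < (A ^ d) i j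
  | 0, i, j, hij => by simp [Fin.ext hij]
  | d + 1, i, j, hij =>
    have hd : (i : ℕ) + d < n := by omega
    pow_add_apply_pos hA (pow_apply_pos_of_superdiag_pos hA hsup d i ⟨i + d, hd⟩ rfl)
      (by rw [pow_one]; exact hsup _ _ (by simp; omega))

theorem pow_apply_pos_of_path_of_loop (hA : ∀ i j, 0 ≤ A i j) (hsymm : A.IsSymm)
    (hsup : ∀ i j : Fin n, (j : ℕ) = i + 1 → 0 < A i j) (hn : 0 < n)
    (hloop : 0 < A ⟨n - 1, by omega⟩ ⟨n - 1, by omega⟩) {k : ℕ} (hk : 2 * (n - 1) ≤ k)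
    (i j : Fin n) : 0 < (A ^ k) i j := by
  have hup := pow_apply_pos_of_superdiag_pos hA hsup (n - 1 - i) i ⟨n - 1, by omega⟩
    (by simp; omega)
  have hdown := pow_apply_pos_of_superdiag_pos hA hsup (n - 1 - j) j ⟨n - 1, by omega⟩
    (by simp; omega)
  rw [← (hsymm.pow _).apply] at hdown
  rw [show k = (n - 1 - i) + ((k - (n - 1 - i) - (n - 1 - j)) + (n - 1 - j)) by omega]
  exact pow_add_apply_pos hA hup (pow_add_apply_pos hA (pow_apply_self_pos hA hloop _) hdown)

end Matrix

open scoped Matrix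

section Companion

variable {n : ℕ}

theorem eq_of_add_transpose_eq {ι R : Type*} [AddCommGroup R] [IsAddTorsionFree R]
    {C D : Matrix ι ι R} (k : ι) (hCD : ∀ i ≠ k, ∀ j, C i j = D i j)
    (h : C + Cᵀ = D + Dᵀ) : C = D := by
  ext i j
  by_cases hi : i = k
  · subst hi
    have hij := congrFun (congrFun h i) j
    simp only [Matrix.add_apply, Matrix.transpose_apply] at hij
    by_cases hj : j = i
    · subst hj
      simpa [← two_nsmul] using hij
    · simpa [hCD j hj i] using hij
  · exact hCD i hi j

theorem IsCompanion.nonneg {C : Matrix (Fin n) (Fin n) ℝ} (hC : IsCompanion C) (i j : Fin n) :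
    0 ≤ C i j := by
  have h := hC i j
  split_ifs at h
  all_goals first | linarith | (obtain h | h := h <;> linarith)

theorem IsCompanion.apply_of_val_eq_succ {C : Matrix (Fin n) (Fin n) ℝ} (hC : IsCompanion C)
    {i j : Fin n} (hij : (j : ℕ) = i + 1) : C i j = 1 := by
  simpa [hij, if_pos (hij ▸ j.isLt)] using hC i j

theorem isPrimitive_add_transpose_of_isCompanion {C : Matrix (Fin n) (Fin n) ℝ}
    (hC : IsCompanion C) (hn : 0 < n) (hloop : C ⟨n - 1, by omega⟩ ⟨n - 1, by omega⟩ = 1) :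
    IsPrimitive (C + Cᵀ) := by
  have hA : ∀ i j, 0 ≤ (C + Cᵀ) i j := fun i j => add_nonneg (hC.nonneg i j) (hC.nonneg j i)
  have hsup : ∀ i j : Fin n, (j : ℕ) = i + 1 → 0 < (C + Cᵀ) i j := fun i j hij => by
    simp only [Matrix.add_apply, Matrix.transpose_apply, hC.apply_of_val_eq_succ hij]
    linarith [hC.nonneg j i]
  refine ⟨hA, 2 * (n - 1) + 1, by omega, fun i j => ?_⟩
  refine Matrix.pow_apply_pos_of_path_of_loop hA (Matrix.isSymm_add_transpose_self C) hsup hn ?_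
    (by omega) i j
  simp [hloop]

theorem isPrimitive_of_mem_companionClass (hn : 0 < n) {α : ℝ} {A : Matrix (Fin n) (Fin n) ℝ}
    (hA : A ∈ companionClass n hn α 1) : IsPrimitive A := by
  obtain ⟨C, hC, -, hloop, rfl⟩ := hA
  exact isPrimitive_add_transpose_of_isCompanion hC hn hloop

def companionOfLastRow (r : Fin n → ℝ) : Matrix (Fin n) (Fin n) ℝ :=
  Matrix.of fun i j => if (i : ℕ) + 1 < n then (if (j : ℕ) = i + 1 then 1 else 0) else r j

theorem companionOfLastRow_apply_last (hn : 0 < n) (r : Fin n → ℝ) (j : Fin n) :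
    companionOfLastRow r ⟨n - 1, by omega⟩ j = r j := by
  simp [companionOfLastRow, show ¬ n - 1 + 1 < n by omega]

theorem isCompanion_companionOfLastRow {r : Fin n → ℝ} (hr : ∀ j, r j = 0 ∨ r j = 1) :
    IsCompanion (companionOfLastRow r) := fun i j => by
  by_cases hi : (i : ℕ) + 1 < n <;> simp [companionOfLastRow, hi, hr]

theorem IsCompanion.eq_companionOfLastRow (hn : 0 < n) {C : Matrix (Fin n) (Fin n) ℝ}
    (hC : IsCompanion C) : C = companionOfLastRow (C ⟨n - 1, by omega⟩) := by
  ext i j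
  have h := hC i j
  by_cases hi : (i : ℕ) + 1 < n
  · rw [if_pos hi] at h
    simp [companionOfLastRow, hi, h]
  · obtain rfl : i = ⟨n - 1, Nat.sub_lt hn one_pos⟩ := Fin.ext (by simp; omega)
    simp [companionOfLastRow, hi]

theorem companionClass_eq_image (hn : 0 < n) (α ε : ℝ) :
    companionClass n hn α ε = (fun r => companionOfLastRow r + (companionOfLastRow r)ᵀ) ''
      {r | (∀ j, r j = 0 ∨ r j = 1) ∧
        r ⟨0, hn⟩ = α ∧ r ⟨n - 1, by omega⟩ = ε} := by
  ext A
  constructor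
  · rintro ⟨C, hC, hα, hε, rfl⟩
    refine ⟨C ⟨n - 1, by omega⟩, ⟨fun j => ?_, hα, hε⟩, ?_⟩
    · simpa [show ¬ n - 1 + 1 < n by omega] using hC ⟨n - 1, by omega⟩ j
    · simp only [← hC.eq_companionOfLastRow hn]
  · rintro ⟨r, ⟨hr, hα, hε⟩, rfl⟩
    exact ⟨_, isCompanion_companionOfLastRow hr, by rwa [companionOfLastRow_apply_last hn],
      by rwa [companionOfLastRow_apply_last hn], rfl⟩

theorem injective_companionOfLastRow_add_transpose (hn : 0 < n) :
    Function.Injective fun r : Fin n → ℝ =>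
      companionOfLastRow r + (companionOfLastRow r)ᵀ := by
  intro r s h
  have hrs := eq_of_add_transpose_eq ⟨n - 1, by omega⟩ (fun i hi j => ?_) h
  · funext j
    rw [← companionOfLastRow_apply_last hn r, hrs, companionOfLastRow_apply_last hn]
  · have : (i : ℕ) ≠ n - 1 := fun h => hi (Fin.ext h)
    have : (i : ℕ) + 1 < n := by omega
    simp [companionOfLastRow, this]

end Companion

noncomputable def lastRowChoices (n : ℕ) (α ε : ℝ) (j : Fin n) : Finset ℝ :=
  if (j : ℕ) = 0 then {α} else if (j : ℕ) = n - 1 then {ε} else {0, 1}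

theorem card_piFinset_lastRowChoices {n : ℕ} (hn : 2 ≤ n) (α ε : ℝ) :
    (Fintype.piFinset (lastRowChoices n α ε)).card = 2 ^ (n - 2) := by
  obtain ⟨m, rfl⟩ := Nat.exists_eq_add_of_le' hn
  rw [Fintype.card_piFinset, Fin.prod_univ_succ, Fin.prod_univ_castSucc]
  simp [lastRowChoices, fun j : Fin m => j.isLt.ne]

theorem coe_piFinset_lastRowChoices {n : ℕ} (hn : 2 ≤ n) {α ε : ℝ} (hα : α = 0 ∨ α = 1)
    (hε : ε = 0 ∨ ε = 1) :
    (Fintype.piFinset (lastRowChoices n α ε) : Set (Fin n → ℝ)) =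
      {r | (∀ j, r j = 0 ∨ r j = 1) ∧
        r ⟨0, by omega⟩ = α ∧ r ⟨n - 1, by omega⟩ = ε} := by
  ext r
  simp only [Fintype.coe_piFinset, Set.mem_pi, Set.mem_univ, true_implies, Finset.mem_coe,
    Set.mem_ofPred_eq, lastRowChoices]
  constructor
  · intro h
    refine ⟨fun j => ?_, by simpa using h ⟨0, by omega⟩,
      by simpa [show n - 1 ≠ 0 by omega] using h ⟨n - 1, by omega⟩⟩
    have := h j
    split_ifs at this <;> simp_all
  · rintro ⟨hr, rfl, rfl⟩ j
    split_ifs with h0 hl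
    · simp [show j = ⟨0, by omega⟩ from Fin.ext h0]
    · simp [show j = ⟨n - 1, by omega⟩ from Fin.ext hl]
    · simpa using hr j

theorem ncard_companionClass {n : ℕ} (hn : 2 ≤ n) {α ε : ℝ} (hα : α = 0 ∨ α = 1)
    (hε : ε = 0 ∨ ε = 1) : (companionClass n (by omega) α ε).ncard = 2 ^ (n - 2) := by
  rw [companionClass_eq_image, ← coe_piFinset_lastRowChoices hn hα hε,
    Set.ncard_image_of_injective _ (injective_companionOfLastRow_add_transpose (by omega)),
    Set.ncard_coe_finset, card_piFinset_lastRowChoices hn]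

/-- For `n ≥ 4` and `α ∈ {0,1}`, every matrix in `C_n^{α,1}` is primitive and
`|PSC_n^{α,1}| = 2^(n-2)`. -/
theorem card_PSC_alpha_one {n : ℕ} (hn : 4 ≤ n) (α : ℝ) (hα : α = 0 ∨ α = 1) :
    (∀ A ∈ companionClass n (by omega) α 1, IsPrimitive A) ∧
      Set.ncard {A ∈ companionClass n (by omega) α 1 | IsPrimitive A} =
        2 ^ (n - 2) := by
  have hprim : ∀ A ∈ companionClass n (by omega) α 1, IsPrimitive A :=
    fun A hA => isPrimitive_of_mem_companionClass _ hA
  refine ⟨hprim, ?_⟩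
  rw [Set.sep_eq_self_iff_mem_true.2 hprim, ncard_companionClass (by omega) hα (Or.inr rfl)]
end

section
/- Let n ≥ 5. The adjacency matrix A of the graph on vertices {1,...,n} with edges {i,i+1} for 1 ≤ i ≤ n−1 together with the edge {n, n−2} (a lollipop: path plus a triangle at the end) is primitive with exp(A) = 2(n−2). -/
namespace Lollipop

def AdjN (n a b : ℕ) : Prop :=
  a + 1 = b ∨ b + 1 = a ∨ (a = n - 1 ∧ b = n - 3) ∨ (a = n - 3 ∧ b = n - 1)

instance (n a b : ℕ) : Decidable (AdjN n a b) := by unfold AdjN; infer_instance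

def W (n k a b : ℕ) : Prop :=
  ∃ f : ℕ → ℕ, f 0 = a ∧ f k = b ∧ (∀ t, t ≤ k → f t < n) ∧
    ∀ t, t < k → AdjN n (f t) (f (t + 1))

lemma W.refl {n a : ℕ} (h : a < n) : W n 0 a a :=
  ⟨fun _ => a, rfl, rfl, fun _ _ => h, fun t ht => absurd ht (by omega)⟩

lemma W.single {n a b : ℕ} (ha : a < n) (hb : b < n) (h : AdjN n a b) : W n 1 a b := by
  refine ⟨fun t => if t = 0 then a else b, by simp, by simp, ?_, ?_⟩
  · intro t ht; by_cases h0 : t = 0 <;> simp [h0, ha, hb]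
  · intro t ht; interval_cases t; simpa using h

lemma W.comp {n k l a b c : ℕ} (h1 : W n k a b) (h2 : W n l b c) : W n (k + l) a c := by
  obtain ⟨f, hf0, hfk, hfB, hfA⟩ := h1
  obtain ⟨g, hg0, hgl, hgB, hgA⟩ := h2
  refine ⟨fun t => if t ≤ k then f t else g (t - k), by simp [hf0], ?_, ?_, ?_⟩
  · by_cases hl : l = 0
    · subst hl; simpa [hfk, hgl.symm, hg0]
    · have : ¬ (k + l ≤ k) := by omega
      simp [this]
      first
      | exact hgl
      | (rw [show k + l - k = l by omega]; exact hgl)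
  · intro t ht
    by_cases htk : t ≤ k
    · simp [htk]; exact hfB t htk
    · simp [htk]; exact hgB (t - k) (by omega)
  · intro t ht
    by_cases h1 : t + 1 ≤ k
    · simp [show t ≤ k by omega, h1]; exact hfA t (by omega)
    · by_cases h2 : t ≤ k
      · have htk : t = k := by omega
        subst htk
        simp [h1, hfk, ← hg0]
        first
        | (rw [show t + 1 - t = 1 by omega]; exact hgA 0 (by omega))
        | exact hgA 0 (by omega)
      · simp [h1, h2]
        rw [show t + 1 - k = (t - k) + 1 by omega]
        exact hgA (t - k) (by omega)

lemma W.pathUp {n a d : ℕ} (h : a + d < n) : W n d a (a + d) := by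
  refine ⟨fun t => if t ≤ d then a + t else a + d, by simp, by simp, ?_, ?_⟩
  · intro t ht; simp [ht]; omega
  · intro t ht
    simp [show t ≤ d by omega, show t + 1 ≤ d by omega]
    left; omega

lemma W.pathDown {n a d : ℕ} (h : a + d < n) : W n d (a + d) a := by
  refine ⟨fun t => a + d - min t d, by simp, by simp, ?_, ?_⟩
  · intro t ht; show a + d - min t d < n; omega
  · intro t ht
    show AdjN n (a + d - min t d) (a + d - min (t + 1) d)
    unfold AdjN; omega


lemma loop2 {n : ℕ} (hn : 5 ≤ n) : W n 2 (n - 3) (n - 3) := by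
  have h1 : W n 1 (n - 3) (n - 2) := W.single (by omega) (by omega) (by left; omega)
  have h2 : W n 1 (n - 2) (n - 3) := W.single (by omega) (by omega) (by right; left; omega)
  exact h1.comp h2

lemma loop3 {n : ℕ} (hn : 5 ≤ n) : W n 3 (n - 3) (n - 3) := by
  have h1 : W n 1 (n - 3) (n - 2) := W.single (by omega) (by omega) (by left; omega)
  have h2 : W n 1 (n - 2) (n - 1) := W.single (by omega) (by omega) (by left; omega)
  have h3 : W n 1 (n - 1) (n - 3) := W.single (by omega) (by omega)
    (by right; right; left; exact ⟨rfl, rfl⟩)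
  exact h1.comp (h2.comp h3)

lemma loopEven {n : ℕ} (hn : 5 ≤ n) : ∀ q, W n (2 * q) (n - 3) (n - 3) := by
  intro q
  induction q with
  | zero => exact W.refl (by omega)
  | succ q ih =>
      have := ih.comp (loop2 hn)
      rw [show 2 * q + 2 = 2 * (q + 1) by ring] at this
      exact this

lemma loopAny {n m : ℕ} (hn : 5 ≤ n) (hm : m ≠ 1) : W n m (n - 3) (n - 3) := by
  rcases Nat.even_or_odd m with he | ho
  · obtain ⟨q, hq⟩ := he
    rw [show m = 2 * q by omega]
    exact loopEven hn q
  · obtain ⟨q, hq⟩ := ho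
    have hq' : q ≠ 0 := by omega
    have := (loop3 hn).comp (loopEven hn (q - 1))
    rw [show 3 + 2 * (q - 1) = m by omega] at this
    exact this

lemma walkToHub {n a : ℕ} (hn : 5 ≤ n) (ha : a < n) :
    W n (max a (n - 3) - min a (n - 3)) a (n - 3) := by
  rcases le_or_gt a (n - 3) with h | h
  · have := W.pathUp (a := a) (d := n - 3 - a) (n := n) (by omega)
    rw [show a + (n - 3 - a) = n - 3 by omega] at this
    rw [show max a (n - 3) - min a (n - 3) = n - 3 - a by omega]
    exact this
  · have := W.pathDown (a := n - 3) (d := a - (n - 3)) (n := n) (by omega)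
    rw [show n - 3 + (a - (n - 3)) = a by omega] at this
    rw [show max a (n - 3) - min a (n - 3) = a - (n - 3) by omega]
    exact this

lemma walkFromHub {n b : ℕ} (hn : 5 ≤ n) (hb : b < n) :
    W n (max b (n - 3) - min b (n - 3)) (n - 3) b := by
  rcases le_or_gt b (n - 3) with h | h
  · have := W.pathDown (a := b) (d := n - 3 - b) (n := n) (by omega)
    rw [show b + (n - 3 - b) = n - 3 by omega] at this
    rw [show max b (n - 3) - min b (n - 3) = n - 3 - b by omega]
    exact this
  · have := W.pathUp (a := n - 3) (d := b - (n - 3)) (n := n) (by omega)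
    rw [show n - 3 + (b - (n - 3)) = b by omega] at this
    rw [show max b (n - 3) - min b (n - 3) = b - (n - 3) by omega]
    exact this

lemma upper {n a b : ℕ} (hn : 5 ≤ n) (ha : a < n) (hb : b < n) :
    W n (2 * n - 4) a b := by
  set pa := max a (n - 3) - min a (n - 3) with hpa
  set pb := max b (n - 3) - min b (n - 3) with hpb
  have hpa3 : pa ≤ n - 3 := by omega
  have hpb3 : pb ≤ n - 3 := by omega
  set m := 2 * n - 4 - pa - pb with hm
  have hm2 : 2 ≤ m := by omega
  have h1 := walkToHub hn ha
  have h2 := loopAny (m := m) hn (by omega)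
  have h3 := walkFromHub hn hb
  have := h1.comp (h2.comp h3)
  rw [show pa + (m + pb) = 2 * n - 4 by omega] at this
  exact this


def Chord (n a b : ℕ) : Prop := (a = n - 1 ∧ b = n - 3) ∨ (a = n - 3 ∧ b = n - 1)

instance (n a b : ℕ) : Decidable (Chord n a b) := by unfold Chord; infer_instance

lemma parity {n : ℕ} (hn : 5 ≤ n) (f : ℕ → ℕ) (s : ℕ) :
    ∀ e, s ≤ e → (∀ t, s ≤ t → t < e → AdjN n (f t) (f (t + 1))) →
    ((e - s) + ((Finset.Ico s e).filter (fun t => Chord n (f t) (f (t + 1)))).card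
      + f s + f e) % 2 = 0 := by
  intro e
  induction e with
  | zero => intro hse _; simp [show s = 0 by omega]; omega
  | succ e ih =>
    intro hse hadj
    rcases Nat.lt_or_ge s (e + 1) with h | h
    · have hse' : s ≤ e := by omega
      have ihh := ih hse' (fun t h1 h2 => hadj t h1 (by omega))
      have hins : Finset.Ico s (e + 1) = insert e (Finset.Ico s e) := by
        rw [Nat.Ico_succ_right_eq_insert_Ico hse']
      rw [hins, Finset.filter_insert]
      have hstep := hadj e hse' (by omega)
      by_cases hc : Chord n (f e) (f (e + 1))
      · have hcard : (insert e ((Finset.Ico s e).filter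
            (fun t => Chord n (f t) (f (t + 1))))).card
            = ((Finset.Ico s e).filter (fun t => Chord n (f t) (f (t + 1)))).card + 1 := by
          rw [Finset.card_insert_of_notMem (by simp)]
        rw [if_pos hc, hcard]
        have : f e + f (e + 1) = 2 * n - 4 := by
          rcases hc with ⟨h1, h2⟩ | ⟨h1, h2⟩ <;> omega
        omega
      · rw [if_neg hc]
        have : f e + 1 = f (e + 1) ∨ f (e + 1) + 1 = f e := by
          rcases hstep with h | h | h | h
          · left; exact h
          · right; exact h
          · exact absurd (Or.inl h) hc
          · exact absurd (Or.inr h) hc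
        omega
    · have hs : s = e + 1 := by omega
      subst hs
      simp
      omega

lemma lower {n k j : ℕ} (hn : 5 ≤ n) (hj : j ≤ 1) (hw : W n k 0 j)
    (hpar : (k + j) % 2 = 1) : 2 * n - 3 - j ≤ k := by
  obtain ⟨f, hf0, hfk, hfB, hfA⟩ := hw
  set C := (Finset.range k).filter (fun t => Chord n (f t) (f (t + 1))) with hC
  have hCico : C = (Finset.Ico 0 k).filter (fun t => Chord n (f t) (f (t + 1))) := by
    rw [hC, Finset.range_eq_Ico]
  have htot := parity hn f 0 k (by omega) (fun t _ h2 => hfA t h2)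
  rw [← hCico] at htot
  have hcodd : C.card % 2 = 1 := by omega
  have hCne : C.Nonempty := by
    rw [← Finset.card_pos]; omega
  obtain ⟨t0, ht0⟩ := hCne
  rw [hC, Finset.mem_filter, Finset.mem_range] at ht0
  obtain ⟨ht0k, ht0c⟩ := ht0
  have ht0ge : n - 3 ≤ f t0 := by rcases ht0c with ⟨h1, _⟩ | ⟨h1, _⟩ <;> omega
  -- first hitting time
  have hex : ∃ t, n - 3 ≤ f t := ⟨t0, ht0ge⟩
  set ts := Nat.find hex with hts
  have htsP : n - 3 ≤ f ts := Nat.find_spec hex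
  have htsmin : ∀ s, s < ts → f s < n - 3 := fun s hs => by
    have := Nat.find_min hex hs; omega
  have htsle : ts ≤ t0 := Nat.find_min' hex ht0ge
  -- before ts, f grows by at most 1
  have hgrow : ∀ s, s ≤ ts → f s ≤ s := by
    intro s
    induction s with
    | zero => intro _; omega
    | succ s ihs =>
      intro hs
      have hfs : f s < n - 3 := htsmin s (by omega)
      have hadj := hfA s (by omega)
      have : f (s + 1) ≤ f s + 1 := by
        rcases hadj with h | h | ⟨h1, h2⟩ | ⟨h1, h2⟩ <;> omega
      have := ihs (by omega)
      omega
  have htsge : n - 3 ≤ ts := le_trans htsP (hgrow ts le_rfl)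
  have htspos : 0 < ts := by
    by_contra h
    have : ts = 0 := by omega
    rw [this] at htsP; omega
  have htseq : f ts = n - 3 := by
    have hfs : f (ts - 1) < n - 3 := htsmin (ts - 1) (by omega)
    have hadj := hfA (ts - 1) (by omega)
    rw [show ts - 1 + 1 = ts by omega] at hadj
    have : f ts ≤ f (ts - 1) + 1 := by
      rcases hadj with h | h | ⟨h1, h2⟩ | ⟨h1, h2⟩ <;> omega
    omega
  -- last hitting time
  set te := Nat.findGreatest (fun t => n - 3 ≤ f t) k with hte
  have hteP : n - 3 ≤ f te :=
    Nat.findGreatest_spec (P := fun t => n - 3 ≤ f t) (m := t0) (by omega) ht0ge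
  have htele : te ≤ k := Nat.findGreatest_le k
  have htemax : ∀ s, te < s → s ≤ k → f s < n - 3 := by
    intro s h1 h2
    have := Nat.findGreatest_is_greatest (P := fun t => n - 3 ≤ f t) (n := k) h1 h2
    omega
  have htelt : te < k := by
    rcases Nat.lt_or_ge te k with h | h
    · exact h
    · exfalso; have : te = k := by omega
      rw [this, hfk] at hteP; omega
  -- after te, f shrinks by at most 1 per step
  have hshrink : ∀ d, te + d ≤ k → f te ≤ f (te + d) + d := by
    intro d
    induction d with
    | zero => intro _; simp
    | succ d ihd =>
      intro hd
      have h1 := ihd (by omega)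
      have hnext : f (te + d + 1) < n - 3 := htemax (te + d + 1) (by omega) (by omega)
      have hadj := hfA (te + d) (by omega)
      have : f (te + d) ≤ f (te + d + 1) + 1 := by
        rcases hadj with h | h | ⟨ha1, ha2⟩ | ⟨ha1, ha2⟩ <;> omega
      rw [show te + (d + 1) = te + d + 1 by omega]
      omega
  have hktee : n - 3 - j ≤ k - te := by
    have := hshrink (k - te) (by omega)
    rw [show te + (k - te) = k by omega, hfk] at this
    omega
  have hteeq : f te = n - 3 := by
    have hnext : f (te + 1) < n - 3 := htemax (te + 1) (by omega) (by omega)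
    have hadj := hfA te (by omega)
    have : f te ≤ f (te + 1) + 1 := by
      rcases hadj with h | h | ⟨ha1, ha2⟩ | ⟨ha1, ha2⟩ <;> omega
    omega
  -- all chords lie in [ts, te)
  have hchord_in : ∀ t, t < k → Chord n (f t) (f (t + 1)) → ts ≤ t ∧ t + 1 ≤ te := by
    intro t htk hc
    have h1 : n - 3 ≤ f t := by rcases hc with ⟨h1, _⟩ | ⟨h1, _⟩ <;> omega
    have h2 : n - 3 ≤ f (t + 1) := by rcases hc with ⟨_, h2⟩ | ⟨_, h2⟩ <;> omega
    constructor
    · exact Nat.find_min' hex h1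
    · by_contra h
      have := htemax (t + 1) (by omega) (by omega)
      omega
  have htste : ts < te := by
    obtain ⟨h1, h2⟩ := hchord_in t0 ht0k ht0c
    omega
  -- middle chord card equals C.card
  have hCmid : C = (Finset.Ico ts te).filter (fun t => Chord n (f t) (f (t + 1))) := by
    ext t
    simp only [hC, Finset.mem_filter, Finset.mem_range, Finset.mem_Ico]
    constructor
    · rintro ⟨h1, h2⟩
      obtain ⟨h3, h4⟩ := hchord_in t h1 h2
      exact ⟨⟨h3, by omega⟩, h2⟩
    · rintro ⟨⟨h1, h2⟩, h3⟩
      exact ⟨by omega, h3⟩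
  -- middle parity
  have hmid := parity hn f ts te (by omega) (fun t h1 h2 => hfA t (by omega))
  rw [← hCmid, htseq, hteeq] at hmid
  set m := te - ts with hm
  have hmodd : m % 2 = 1 := by omega
  have hm1 : m ≠ 1 := by
    intro h1
    have hIco : Finset.Ico ts te = {ts} := by
      rw [show te = ts + 1 by omega]
      simp [Nat.Ico_succ_right_eq_insert_Ico]
    rw [hCmid, hIco] at hcodd
    have hts_mem : Chord n (f ts) (f (ts + 1)) := by
      by_contra hc
      rw [Finset.filter_singleton, if_neg hc] at hcodd
      simp at hcodd
    rw [htseq, show ts + 1 = te by omega, hteeq] at hts_mem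
    rcases hts_mem with ⟨ha1, ha2⟩ | ⟨ha1, ha2⟩ <;> omega
  omega


section Bridge

variable {n : ℕ} (L : Matrix (Fin n) (Fin n) ℝ)
  (hL : L = Matrix.of fun i j : Fin n =>
      if (i : ℕ) + 1 = (j : ℕ) ∨ (j : ℕ) + 1 = (i : ℕ) ∨
        ((i : ℕ) = n - 1 ∧ (j : ℕ) = n - 3) ∨
        ((i : ℕ) = n - 3 ∧ (j : ℕ) = n - 1) then (1 : ℝ) else 0)

include hL

lemma L_pos_iff (i j : Fin n) : 0 < L i j ↔ AdjN n i j := by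
  subst hL
  simp only [Matrix.of_apply, AdjN]
  split_ifs with h
  · simpa using h
  · simpa using h

lemma L_nonneg (i j : Fin n) : 0 ≤ L i j := by
  subst hL
  simp only [Matrix.of_apply]
  split_ifs <;> norm_num

lemma pow_nonneg : ∀ k (i j : Fin n), 0 ≤ (L ^ k) i j := by
  intro k
  induction k with
  | zero =>
    intro i j
    simp [Matrix.one_apply]
    split_ifs <;> norm_num
  | succ k ih =>
    intro i j
    rw [pow_succ, Matrix.mul_apply]
    exact Finset.sum_nonneg fun m _ => mul_nonneg (ih i m) (L_nonneg L hL m j)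

lemma pow_pos_iff : ∀ k (i j : Fin n), 0 < (L ^ k) i j ↔ W n k i j := by
  intro k
  induction k with
  | zero =>
    intro i j
    rw [pow_zero]
    simp only [Matrix.one_apply]
    constructor
    · intro h
      split_ifs at h with hij
      · subst hij; exact W.refl i.isLt
      · norm_num at h
    · rintro ⟨f, hf0, hfk, -, -⟩
      have : i = j := Fin.ext (by rw [← hf0, hfk])
      simp [this]
  | succ k ih =>
    intro i j
    rw [pow_succ, Matrix.mul_apply]
    constructor
    · intro h
      by_contra hW
      have hz : ∀ m ∈ Finset.univ, (L ^ k) i m * L m j ≤ 0 := by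
        intro m _
        rcases lt_or_ge 0 ((L ^ k) i m) with h1 | h1
        · rcases lt_or_ge 0 (L m j) with h2 | h2
          · exfalso
            apply hW
            obtain ⟨f, hf0, hfk, hfB, hfA⟩ := (ih i m).mp h1
            have hadj : AdjN n (m : ℕ) (j : ℕ) := (L_pos_iff L hL m j).mp h2
            refine ⟨fun t => if t ≤ k then f t else (j : ℕ), by simp [hf0], by simp, ?_, ?_⟩
            · intro t ht
              by_cases h3 : t ≤ k
              · simp [h3]; exact hfB t h3
              · simpa [h3] using j.isLt
            · intro t ht
              by_cases h3 : t + 1 ≤ k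
              · simp [show t ≤ k by omega, h3]
                exact hfA t (by omega)
              · have ht3 : t = k := by omega
                subst ht3
                simp [h3, hfk]
                exact hadj
          · have : L m j = 0 := le_antisymm h2 (L_nonneg L hL m j)
            simp [this]
        · have : (L ^ k) i m = 0 := le_antisymm h1 (pow_nonneg L hL k i m)
          simp [this]
      have := Finset.sum_nonpos hz
      linarith
    · rintro ⟨f, hf0, hfk, hfB, hfA⟩
      have hmlt : f k < n := hfB k (by omega)
      set m : Fin n := ⟨f k, hmlt⟩ with hm
      have h1 : 0 < (L ^ k) i m := by
        rw [ih]
        exact ⟨f, hf0, rfl, fun t ht => hfB t (by omega), fun t ht => hfA t (by omega)⟩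
      have h2 : 0 < L m j := by
        rw [L_pos_iff L hL]
        have := hfA k (by omega)
        rw [hfk] at this
        exact this
      refine Finset.sum_pos' (fun x _ => mul_nonneg (pow_nonneg L hL k i x) (L_nonneg L hL x j)) ?_
      exact ⟨m, Finset.mem_univ m, mul_pos h1 h2⟩

end Bridge

end Lollipop

/-- For `n ≥ 5`, the adjacency matrix of the lollipop graph (path
`1 - 2 - ⋯ - n` plus the edge `{n, n-2}`; 0-based: edges `{i, i+1}` and
`{n-1, n-3}`) is primitive with exponent `2(n-2)`. -/
theorem lollipop_primitive_exp {n : ℕ} (hn : 5 ≤ n)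
    (L : Matrix (Fin n) (Fin n) ℝ)
    (hL : L = Matrix.of fun i j : Fin n =>
      if (i : ℕ) + 1 = (j : ℕ) ∨ (j : ℕ) + 1 = (i : ℕ) ∨
        ((i : ℕ) = n - 1 ∧ (j : ℕ) = n - 3) ∨
        ((i : ℕ) = n - 3 ∧ (j : ℕ) = n - 1) then (1 : ℝ) else 0) :
    IsPrimitive L ∧ ExpIs L (2 * (n - 2)) := by
  have hpow := Lollipop.pow_pos_iff L hL
  have hnn := Lollipop.L_nonneg L hL
  have hposall : ∀ i j : Fin n, 0 < (L ^ (2 * (n - 2))) i j := by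
    intro i j
    rw [show 2 * (n - 2) = 2 * n - 4 by omega, hpow]
    exact Lollipop.upper hn i.isLt j.isLt
  refine ⟨⟨hnn, ⟨2 * (n - 2), by omega, hposall⟩⟩, ⟨by omega, hposall⟩, ?_⟩
  intro k hk
  obtain ⟨hk0, hkpos⟩ := hk
  by_contra hcon
  push_neg at hcon
  rcases Nat.even_or_odd k with he | ho
  · have hw : Lollipop.W n k ((⟨0, by omega⟩ : Fin n) : ℕ) ((⟨1, by omega⟩ : Fin n) : ℕ) :=
      (hpow k ⟨0, by omega⟩ ⟨1, by omega⟩).mp (hkpos _ _)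
    have hw' : Lollipop.W n k 0 1 := hw
    have hlb := Lollipop.lower hn (le_refl 1) hw'
      (by rw [Nat.even_iff] at he; omega)
    omega
  · have hw : Lollipop.W n k ((⟨0, by omega⟩ : Fin n) : ℕ) ((⟨0, by omega⟩ : Fin n) : ℕ) :=
      (hpow k ⟨0, by omega⟩ ⟨0, by omega⟩).mp (hkpos _ _)
    have hw' : Lollipop.W n k 0 0 := hw
    have hlb := Lollipop.lower hn (by omega) hw'
      (by rw [Nat.odd_iff] at ho; omega)
    omega
end
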